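/- arXiv:gr-qc/0407094 — 2 statements merged into one kernel-verified Lean document; each statement's English description precedes it below -/
import Mathlib

section
/- In a continuous poset, the sets ↟x = {y : x ≪ y}, for x ranging over the poset, form a basis for the Scott topology. -/
open Set

/-- `a` is way below `x`. -/
def wayBelow {α : Type*} [Preorder α] (a x : α) : Prop :=
  ∀ S : Set α, S.Nonempty → DirectedOn (· ≤ ·) S → ∀ d, IsLUB S d → x ≤ d →
    ∃ s ∈ S, a ≤ s

/-- A poset is continuous if every element is the supremum of a directed set
of elements way below it. -/
def ContinuousPoset (α : Type*) [Preorder α] : Prop :=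
  ∀ x : α, ∃ S : Set α, S ⊆ {a | wayBelow a x} ∧ S.Nonempty ∧
    DirectedOn (· ≤ ·) S ∧ IsLUB S x

/-- A basis for a continuous poset. -/
def PosetBasis {α : Type*} [Preorder α] (B : Set α) : Prop :=
  ∀ x : α, ∃ S : Set α, S ⊆ B ∩ {a | wayBelow a x} ∧ S.Nonempty ∧
    DirectedOn (· ≤ ·) S ∧ IsLUB S x

/-- Scott open sets: upper sets inaccessible by directed suprema. -/
def ScottOpen {α : Type*} [Preorder α] (U : Set α) : Prop :=
  IsUpperSet U ∧ ∀ S : Set α, S.Nonempty → DirectedOn (· ≤ ·) S → ∀ d, IsLUB S d →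
    d ∈ U → (S ∩ U).Nonempty

/-- The Scott topology. -/
def scottTop (α : Type*) [Preorder α] : TopologicalSpace α :=
  TopologicalSpace.generateFrom {U | ScottOpen U}

/-- A bicontinuous poset. -/
def Bicontinuous (α : Type*) [Preorder α] : Prop :=
  ContinuousPoset α ∧
  (∀ x y : α, wayBelow x y ↔
    ∀ S : Set α, S.Nonempty → DirectedOn (· ≥ ·) S → ∀ i, IsGLB S i → i ≤ x →
      ∃ s ∈ S, s ≤ y) ∧
  (∀ x : α, DirectedOn (· ≥ ·) {y | wayBelow x y} ∧ IsGLB {y | wayBelow x y} x)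

/-- The basic open intervals `(a,b) = {x | a ≪ x ≪ b}`. -/
def intervalBasis (α : Type*) [Preorder α] : Set (Set α) :=
  {s | ∃ a b : α, s = {x | wayBelow a x ∧ wayBelow x b}}

/-- The interval topology, generated by the sets `(a,b)`. -/
def intervalTop (α : Type*) [Preorder α] : TopologicalSpace α :=
  TopologicalSpace.generateFrom (intervalBasis α)

/-- A globally hyperbolic poset: bicontinuous, with compact closed intervals. -/
def GloballyHyperbolic (α : Type*) [PartialOrder α] : Prop :=
  Bicontinuous α ∧ ∀ a b : α, @IsCompact α (intervalTop α) (Set.Icc a b)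

/-- The poset of closed intervals `[a,b]`, `a ≤ b`, under reverse inclusion. -/
def IX (α : Type*) [PartialOrder α] := {p : α × α // p.1 ≤ p.2}

instance IX.instPartialOrder {α : Type*} [PartialOrder α] : PartialOrder (IX α) where
  le x y := x.1.1 ≤ y.1.1 ∧ y.1.2 ≤ x.1.2
  le_refl x := ⟨le_refl _, le_refl _⟩
  le_trans x y z h1 h2 := ⟨h1.1.trans h2.1, h2.2.trans h1.2⟩
  le_antisymm x y h1 h2 :=
    Subtype.ext (Prod.ext_iff.mpr ⟨le_antisymm h1.1 h2.1, le_antisymm h2.2 h1.2⟩)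

section Rel

variable {β : Type*}

/-- Directedness with respect to an arbitrary relation. -/
def relDirectedOn (r : β → β → Prop) (S : Set β) : Prop :=
  ∀ x ∈ S, ∀ y ∈ S, ∃ z ∈ S, r x z ∧ r y z

/-- Least upper bound with respect to an arbitrary relation. -/
def relIsLUB (r : β → β → Prop) (S : Set β) (d : β) : Prop :=
  (∀ s ∈ S, r s d) ∧ ∀ u, (∀ s ∈ S, r s u) → r d u

/-- The way-below relation with respect to an arbitrary relation. -/
def relWayBelow (r : β → β → Prop) (a x : β) : Prop :=
  ∀ S : Set β, S.Nonempty → relDirectedOn r S → ∀ d, relIsLUB r S d → r x d →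
    ∃ s ∈ S, r a s

/-- An abstract basis: a transitive relation, interpolative from the `-` direction. -/
def AbstractBasis (r : β → β → Prop) : Prop :=
  Transitive r ∧ ∀ (F : Finset β) (x : β), (∀ y ∈ F, r y x) →
    ∃ z, (∀ y ∈ F, r y z) ∧ r z x

/-- Interpolation in the `+` direction. -/
def PlusInterpolative (r : β → β → Prop) : Prop :=
  ∀ (F : Finset β) (x : β), (∀ y ∈ F, r x y) → ∃ z, r x z ∧ (∀ y ∈ F, r z y)

/-- An ideal: a nonempty directed lower set. -/
def IsIdeal (r : β → β → Prop) (I : Set β) : Prop :=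
  I.Nonempty ∧ (∀ x y, r x y → y ∈ I → x ∈ I) ∧
    ∀ x ∈ I, ∀ y ∈ I, ∃ z ∈ I, r x z ∧ r y z

/-- The ideal completion: ideals ordered by inclusion. -/
def IdealCompletion (r : β → β → Prop) := {I : Set β // IsIdeal r I}

instance IdealCompletion.instPartialOrder {β : Type*} (r : β → β → Prop) :
    PartialOrder (IdealCompletion r) where
  le I J := I.1 ⊆ J.1
  le_refl I := subset_rfl
  le_trans I J K h1 h2 := Set.Subset.trans h1 h2
  le_antisymm I J h1 h2 := Subtype.ext (Set.Subset.antisymm h1 h2)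

end Rel

/-- The order on maximal elements induced by interval endpoints. -/
def maxLe {α : Type*} (left right : α → α) (a b : α) : Prop :=
  ∃ x, left x = a ∧ right x = b

/-- An interval poset. -/
structure IntervalPoset (α : Type*) [PartialOrder α] where
  left : α → α
  right : α → α
  left_max : ∀ x, IsMax (left x)
  right_max : ∀ x, IsMax (right x)
  glb : ∀ x, IsGLB {left x, right x} x
  glue : ∀ x y, right x = left y →
    ∃ z, IsGLB {x, y} z ∧ left z = left x ∧ right z = right y
  sub_left : ∀ x p, IsMax p → x ≤ p →
    ∃ z, IsGLB {left x, p} z ∧ left z = left x ∧ right z = p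
  sub_right : ∀ x p, IsMax p → x ≤ p →
    ∃ z, IsGLB {p, right x} z ∧ left z = p ∧ right z = right x

/-- An interval domain. -/
structure IntervalDomain (α : Type*) [PartialOrder α] extends IntervalPoset α where
  dcpo : ∀ S : Set α, S.Nonempty → DirectedOn (· ≤ ·) S → ∃ d, IsLUB S d
  cont : ContinuousPoset α
  ax1 : ∀ x p, IsMax p → wayBelow x p →
    (∀ z, IsGLB {left x, p} z → ∃ u, wayBelow z u) ∧
    (∀ z, IsGLB {p, right x} z → ∃ u, wayBelow z u)
  ax2b : ∀ x : α, (∃ u, wayBelow x u) ↔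
    (∀ y, left y = left x → y ≤ x →
      relWayBelow (fun u v => u ≤ v ∧ right u = right y ∧ right v = right y) y (right y))
  ax2c : ∀ x : α, (∃ u, wayBelow x u) ↔
    (∀ y, right y = right x → y ≤ x →
      relWayBelow (fun u v => u ≤ v ∧ left u = left y ∧ left v = left y) y (left y))
  ax3a : ∀ (p : α) (S : Set α), S.Nonempty → S ⊆ {z | left z = p} →
    DirectedOn (· ≤ ·) S → ∀ u, IsLUB S u →
      left u = p ∧ ∀ (q : α) (T : Set α), T.Nonempty → T ⊆ {z | left z = q} →
        DirectedOn (· ≤ ·) T → ∀ v, IsLUB T v → right '' T = right '' S →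
          right u = right v
  ax3b : ∀ (q : α) (S : Set α), S.Nonempty → S ⊆ {z | right z = q} →
    DirectedOn (· ≤ ·) S → ∀ u, IsLUB S u →
      right u = q ∧ ∀ (p : α) (T : Set α), T.Nonempty → T ⊆ {z | right z = p} →
        DirectedOn (· ≤ ·) T → ∀ v, IsLUB T v → left '' T = left '' S →
          left u = left v
  ax4 : ∀ x : α, @IsCompact α (scottTop α) ({y | x ≤ y} ∩ {y | IsMax y})

/-! Interpolation `a ≪ x → ∃ b, a ≪ b ≪ x` makes each `↟a` Scott open. Conversely, a Scott
open `U ∋ x` must meet the directed set of elements way below `x`, whose supremum is `x`, so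
`x ∈ ↟a ⊆ U` for some `a ∈ U`. -/

section WayBelow

variable {α : Type*} [PartialOrder α] {a b x y : α}

lemma wayBelow.exists_le_of_isLUB {S : Set α} (h : wayBelow a x) (hne : S.Nonempty)
    (hdir : DirectedOn (· ≤ ·) S) (hlub : IsLUB S x) : ∃ s ∈ S, a ≤ s :=
  h S hne hdir x hlub le_rfl

lemma wayBelow.le (h : wayBelow a x) : a ≤ x := by
  obtain ⟨s, hs, has⟩ :=
    h.exists_le_of_isLUB (singleton_nonempty x) (directedOn_singleton x) isLUB_singleton
  rwa [mem_singleton_iff.1 hs] at has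

lemma wayBelow.trans_le (h : wayBelow a x) (hxy : x ≤ y) : wayBelow a y :=
  fun S hne hdir d hlub hyd => h S hne hdir d hlub (hxy.trans hyd)

lemma wayBelow_of_le_of_wayBelow (hab : a ≤ b) (h : wayBelow b x) : wayBelow a x := by
  intro S hne hdir d hlub hxd
  obtain ⟨s, hs, hbs⟩ := h S hne hdir d hlub hxd
  exact ⟨s, hs, hab.trans hbs⟩

end WayBelow

section Approximation

variable {α : Type*} [PartialOrder α] {S : Set α} {T : α → Set α}

lemma directedOn_biUnion_of_wayBelow (hS : DirectedOn (· ≤ ·) S)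
    (hT : ∀ s, T s ⊆ {a | wayBelow a s}) (hTne : ∀ s, (T s).Nonempty)
    (hTdir : ∀ s, DirectedOn (· ≤ ·) (T s)) (hTlub : ∀ s, IsLUB (T s) s) :
    DirectedOn (· ≤ ·) (⋃ s ∈ S, T s) := by
  intro t₁ ht₁ t₂ ht₂
  obtain ⟨s₁, hs₁, ht₁⟩ := mem_iUnion₂.1 ht₁
  obtain ⟨s₂, hs₂, ht₂⟩ := mem_iUnion₂.1 ht₂
  obtain ⟨s, hs, hs₁s, hs₂s⟩ := hS s₁ hs₁ s₂ hs₂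
  obtain ⟨u₁, hu₁, htu₁⟩ :=
    ((hT s₁ ht₁).trans_le hs₁s).exists_le_of_isLUB (hTne s) (hTdir s) (hTlub s)
  obtain ⟨u₂, hu₂, htu₂⟩ :=
    ((hT s₂ ht₂).trans_le hs₂s).exists_le_of_isLUB (hTne s) (hTdir s) (hTlub s)
  obtain ⟨u, hu, hu₁u, hu₂u⟩ := hTdir s u₁ hu₁ u₂ hu₂
  exact ⟨u, mem_biUnion hs hu, htu₁.trans hu₁u, htu₂.trans hu₂u⟩

lemma isLUB_biUnion_of_wayBelow {x : α} (hSlub : IsLUB S x)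
    (hT : ∀ s, T s ⊆ {a | wayBelow a s}) (hTlub : ∀ s, IsLUB (T s) s) :
    IsLUB (⋃ s ∈ S, T s) x := by
  refine ⟨fun t ht => ?_, fun u hu => hSlub.2 fun s hs => (hTlub s).2 fun t ht => ?_⟩
  · obtain ⟨s, hs, hts⟩ := mem_iUnion₂.1 ht
    exact (hT s hts).le.trans (hSlub.1 hs)
  · exact hu (mem_biUnion hs ht)

/-- Interpolation: the union of approximations of the approximants of `x` is again an
approximation of `x`, so some approximant `b` of `x` lies way above `a`. -/
lemma ContinuousPoset.exists_wayBelow_wayBelow (hc : ContinuousPoset α) {a x : α}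
    (h : wayBelow a x) : ∃ b, wayBelow a b ∧ wayBelow b x := by
  obtain ⟨S, hS, hSne, hSdir, hSlub⟩ := hc x
  choose T hT hTne hTdir hTlub using hc
  obtain ⟨s₀, hs₀⟩ := hSne
  obtain ⟨t, ht, hat⟩ := h.exists_le_of_isLUB (hTne s₀ |>.mono (subset_biUnion_of_mem hs₀))
    (directedOn_biUnion_of_wayBelow hSdir hT hTne hTdir hTlub)
    (isLUB_biUnion_of_wayBelow hSlub hT hTlub)
  obtain ⟨s, hs, hts⟩ := mem_iUnion₂.1 ht
  exact ⟨s, wayBelow_of_le_of_wayBelow hat (hT s hts), hS hs⟩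

end Approximation

section ScottTopology

open Topology

variable {α : Type*} [PartialOrder α]

lemma scottOpen_iff_isOpen_scott {U : Set α} :
    ScottOpen U ↔ IsOpen[Topology.scott α univ] U := by
  let _ := Topology.scott α univ
  have : Topology.IsScott α univ := ⟨rfl⟩
  rw [Topology.IsScott.isOpen_iff_isUpperSet_and_dirSupInaccOn (D := univ), dirSupInaccOn_univ]
  rfl

lemma scottTop_eq_scott : scottTop α = Topology.scott α univ := by
  have : {U : Set α | ScottOpen U} = {U | IsOpen[Topology.scott α univ] U} :=
    ext fun _ => scottOpen_iff_isOpen_scott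
  rw [scottTop, this, TopologicalSpace.generateFrom_setOfPred_isOpen]

lemma ContinuousPoset.scottOpen_setOf_wayBelow (hc : ContinuousPoset α) (a : α) :
    ScottOpen {y | wayBelow a y} := by
  refine ⟨fun x y hxy hx => hx.trans_le hxy, fun S hne hdir d hlub hd => ?_⟩
  obtain ⟨b, hab, hbd⟩ := hc.exists_wayBelow_wayBelow hd
  obtain ⟨s, hs, hbs⟩ := hbd.exists_le_of_isLUB hne hdir hlub
  exact ⟨s, hs, hab.trans_le hbs⟩

lemma ContinuousPoset.exists_wayBelow_mem_of_scottOpen (hc : ContinuousPoset α) {U : Set α}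
    (hU : ScottOpen U) {x : α} (hx : x ∈ U) : ∃ a ∈ U, wayBelow a x := by
  obtain ⟨S, hS, hSne, hSdir, hSlub⟩ := hc x
  obtain ⟨a, haS, haU⟩ := hU.2 S hSne hSdir x hSlub hx
  exact ⟨a, haU, hS haS⟩

end ScottTopology

/-- the sets `↟x` form a basis for the Scott topology on a continuous poset. -/
theorem scott_basis {α : Type*} [PartialOrder α] (h : ContinuousPoset α) :
    @TopologicalSpace.IsTopologicalBasis α (scottTop α)
      {s | ∃ a : α, s = {y | wayBelow a y}} := by
  rw [scottTop_eq_scott]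
  let _ := Topology.scott α univ
  refine TopologicalSpace.isTopologicalBasis_of_isOpen_of_nhds ?_ fun x U hxU hU => ?_
  · rintro _ ⟨a, rfl⟩
    exact scottOpen_iff_isOpen_scott.1 (h.scottOpen_setOf_wayBelow a)
  · have hU : ScottOpen U := scottOpen_iff_isOpen_scott.2 hU
    obtain ⟨a, haU, hax⟩ := h.exists_wayBelow_mem_of_scottOpen hU hxU
    exact ⟨_, ⟨a, rfl⟩, hax, fun y hy => hU.1 hy.le haU⟩
end

section
/- On a bicontinuous poset P, the sets (a,b) = {x : a ≪ x ≪ b}, for a,b ∈ P, form a basis for a topology (the interval topology). -/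
open Set

/-! Continuity makes the elements way below `x` directed, and bicontinuity makes those way
above `x` filtered, so two intervals `(a₁, b₁)` and `(a₂, b₂)` around `x` can be shrunk to a
single interval `(s, t)` around `x` inside both; neither set is empty, so the intervals also
cover the poset. -/

section WayBelow

variable {α : Type*} [Preorder α]

lemma wayBelow_of_le_of_wayBelow_s2 {a' a x : α} (h : a' ≤ a) (hw : wayBelow a x) :
    wayBelow a' x := fun S hS hd d hlub hxd =>
  let ⟨s, hs, has⟩ := hw S hS hd d hlub hxd
  ⟨s, hs, h.trans has⟩

lemma wayBelow_of_wayBelow_of_le {a x y : α} (hw : wayBelow a x) (h : x ≤ y) :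
    wayBelow a y := fun S hS hd d hlub hyd => hw S hS hd d hlub (h.trans hyd)

def wayInterval (a b : α) : Set α := {x | wayBelow a x ∧ wayBelow x b}

lemma wayInterval_mem_intervalBasis (a b : α) : wayInterval a b ∈ intervalBasis α :=
  ⟨a, b, rfl⟩

lemma wayInterval_subset_wayInterval {a b s t : α} (has : a ≤ s) (htb : t ≤ b) :
    wayInterval s t ⊆ wayInterval a b := fun _ ⟨hs, ht⟩ =>
  ⟨wayBelow_of_le_of_wayBelow_s2 has hs, wayBelow_of_wayBelow_of_le ht htb⟩

lemma ContinuousPoset.exists_wayBelow (hα : ContinuousPoset α) (x : α) :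
    ∃ a, wayBelow a x :=
  let ⟨_, hSx, ⟨a, ha⟩, _⟩ := hα x
  ⟨a, hSx ha⟩

lemma ContinuousPoset.exists_wayBelow_ge_of_wayBelow (hα : ContinuousPoset α) {a₁ a₂ x : α}
    (h₁ : wayBelow a₁ x) (h₂ : wayBelow a₂ x) : ∃ s, wayBelow s x ∧ a₁ ≤ s ∧ a₂ ≤ s := by
  obtain ⟨S, hSx, hSne, hSdir, hSlub⟩ := hα x
  obtain ⟨s₁, hs₁, has₁⟩ := h₁ S hSne hSdir x hSlub le_rfl
  obtain ⟨s₂, hs₂, has₂⟩ := h₂ S hSne hSdir x hSlub le_rfl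
  obtain ⟨s, hs, hs₁s, hs₂s⟩ := hSdir s₁ hs₁ s₂ hs₂
  exact ⟨s, hSx hs, has₁.trans hs₁s, has₂.trans hs₂s⟩

/-- If nothing were way above `x`, then `x` would be the infimum of `∅`, i.e. the top element,
and the top element is way above itself by the filtered-set characterisation of `≪`. -/
lemma Bicontinuous.exists_wayAbove (h : Bicontinuous α) (x : α) : ∃ b, wayBelow x b := by
  by_contra! hx
  have hempty : {y | wayBelow x y} = ∅ := eq_empty_iff_forall_notMem.2 hx
  have htop : IsTop x := isGLB_empty_iff.1 (hempty ▸ (h.2.2 x).2)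
  refine hx x ((h.2.1 x x).2 fun S hS _ _ _ _ => ?_)
  obtain ⟨s, hs⟩ := hS
  exact ⟨s, hs, htop s⟩

lemma Bicontinuous.exists_wayAbove_le_of_wayBelow (h : Bicontinuous α) {x b₁ b₂ : α}
    (h₁ : wayBelow x b₁) (h₂ : wayBelow x b₂) : ∃ t, wayBelow x t ∧ t ≤ b₁ ∧ t ≤ b₂ := by
  obtain ⟨hdir, hglb⟩ := h.2.2 x
  have hne : {y | wayBelow x y}.Nonempty := h.exists_wayAbove x
  obtain ⟨t₁, ht₁, ht₁b₁⟩ := (h.2.1 x b₁).1 h₁ _ hne hdir x hglb le_rfl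
  obtain ⟨t₂, ht₂, ht₂b₂⟩ := (h.2.1 x b₂).1 h₂ _ hne hdir x hglb le_rfl
  obtain ⟨t, ht, htt₁, htt₂⟩ := hdir t₁ ht₁ t₂ ht₂
  exact ⟨t, ht, htt₁.trans ht₁b₁, htt₂.trans ht₂b₂⟩

end WayBelow

/-- on a bicontinuous poset, the sets `(a,b) = {x | a ≪ x ≪ b}` form a
basis for a topology, the interval topology. -/
theorem interval_basis_is_basis {α : Type*} [PartialOrder α] (h : Bicontinuous α) :
    @TopologicalSpace.IsTopologicalBasis α (intervalTop α) (intervalBasis α) := by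
  let _ : TopologicalSpace α := intervalTop α
  refine ⟨?_, ?_, rfl⟩
  · rintro _ ⟨a₁, b₁, rfl⟩ _ ⟨a₂, b₂, rfl⟩ x ⟨⟨ha₁, hb₁⟩, ⟨ha₂, hb₂⟩⟩
    obtain ⟨s, hs, has₁, has₂⟩ := h.1.exists_wayBelow_ge_of_wayBelow ha₁ ha₂
    obtain ⟨t, ht, htb₁, htb₂⟩ := h.exists_wayAbove_le_of_wayBelow hb₁ hb₂
    exact ⟨wayInterval s t, wayInterval_mem_intervalBasis s t, ⟨hs, ht⟩,
      subset_inter (wayInterval_subset_wayInterval has₁ htb₁)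
        (wayInterval_subset_wayInterval has₂ htb₂)⟩
  · refine sUnion_eq_univ_iff.2 fun x => ?_
    obtain ⟨a, ha⟩ := h.1.exists_wayBelow x
    obtain ⟨b, hb⟩ := h.exists_wayAbove x
    exact ⟨wayInterval a b, wayInterval_mem_intervalBasis a b, ha, hb⟩
end
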